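/- Let (S,⊣,⊢,⊥,γ,ξ) be a BiHom-associative trialgebra over a field F, let s, r, s′, r′ be nonnegative integers, and let c₁ be a (γ^s ξ^r)-quasicentroid element and c₂ a (γ^{s′} ξ^{r′})-quasicentroid element of S. Then the commutator [c₁,c₂] = c₁∘c₂ − c₂∘c₁ is a (γ^{s+s′} ξ^{r+r′})-quasiderivation of S (with associated map δ′ = 0, i.e. [c₁,c₂](x) ∘ t(y) + t(x) ∘ [c₁,c₂](y) = 0 for each ∘ ∈ {⊣,⊢,⊥}, where t = γ^{s+s′} ∘ ξ^{r+r′}); that is, [QC(S), QC(S)] ⊆ QD(S). -/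
import Mathlib

section Aux

variable {S : Type*}

theorem comm_iter {f g : S → S} (h : ∀ x, f (g x) = g (f x)) :
    ∀ (n : ℕ) (x : S), f (g^[n] x) = g^[n] (f x) := by
  intro n
  induction n with
  | zero => intro x; simp
  | succ k ih =>
    intro x
    rw [Function.iterate_succ_apply, ih, h, Function.iterate_succ_apply]

theorem iter_iter {f g : S → S} (h : ∀ x, f (g x) = g (f x)) :
    ∀ (a b : ℕ) (x : S), f^[a] (g^[b] x) = g^[b] (f^[a] x) := by
  intro a
  induction a with
  | zero => intro b x; simp
  | succ k ih =>
    intro b x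
    rw [Function.iterate_succ_apply, comm_iter h, ih, ← Function.iterate_succ_apply]

variable {F : Type*} [Field F] [AddCommGroup S] [Module F S]

theorem op_sub_left {op : S → S → S}
    (hadd : ∀ x y z : S, op (x + y) z = op x z + op y z)
    (hsmul : ∀ (a : F) (x y : S), op (a • x) y = a • op x y)
    (x y z : S) : op (x - y) z = op x z - op y z := by
  have : x - y = x + (-1 : F) • y := by
    rw [neg_one_smul]; abel
  rw [this, hadd, hsmul, neg_one_smul]; abel

theorem op_sub_right {op : S → S → S}
    (hadd : ∀ x y z : S, op x (y + z) = op x y + op x z)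
    (hsmul : ∀ (a : F) (x y : S), op x (a • y) = a • op x y)
    (x y z : S) : op x (y - z) = op x y - op x z := by
  have : y - z = y + (-1 : F) • z := by
    rw [neg_one_smul]; abel
  rw [this, hadd, hsmul, neg_one_smul]; abel

/-- The key computation for a single bilinear operation. -/
theorem key_op (γ ξ : S → S) (hγξ : ∀ x, γ (ξ x) = ξ (γ x))
    (s t s' t' : ℕ) (c₁ c₂ : S → S)
    (hc₁γ : ∀ x, c₁ (γ x) = γ (c₁ x)) (hc₁ξ : ∀ x, c₁ (ξ x) = ξ (c₁ x))
    (hc₂γ : ∀ x, c₂ (γ x) = γ (c₂ x)) (hc₂ξ : ∀ x, c₂ (ξ x) = ξ (c₂ x))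
    (op : S → S → S)
    (haddl : ∀ x y z : S, op (x + y) z = op x z + op y z)
    (hsmull : ∀ (a : F) (x y : S), op (a • x) y = a • op x y)
    (haddr : ∀ x y z : S, op x (y + z) = op x y + op x z)
    (hsmulr : ∀ (a : F) (x y : S), op x (a • y) = a • op x y)
    (hc₁op : ∀ x y : S, op (c₁ x) (γ^[s] (ξ^[t] y)) = op (γ^[s] (ξ^[t] x)) (c₁ y))
    (hc₂op : ∀ x y : S, op (c₂ x) (γ^[s'] (ξ^[t'] y)) = op (γ^[s'] (ξ^[t'] x)) (c₂ y))
    (x y : S) :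
    op (c₁ (c₂ x) - c₂ (c₁ x)) (γ^[s + s'] (ξ^[t + t'] y))
      + op (γ^[s + s'] (ξ^[t + t'] x)) (c₁ (c₂ y) - c₂ (c₁ y)) = 0 := by
  have hAB : ∀ z : S, γ^[s + s'] (ξ^[t + t'] z) = γ^[s] (ξ^[t] (γ^[s'] (ξ^[t'] z))) := by
    intro z
    rw [Function.iterate_add_apply, Function.iterate_add_apply, iter_iter hγξ]
  have hBA : ∀ z : S, γ^[s + s'] (ξ^[t + t'] z) = γ^[s'] (ξ^[t'] (γ^[s] (ξ^[t] z))) := by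
    intro z
    rw [Nat.add_comm s s', Nat.add_comm t t', Function.iterate_add_apply,
      Function.iterate_add_apply, iter_iter hγξ]
  have hc₁A : ∀ z : S, c₁ (γ^[s'] (ξ^[t'] z)) = γ^[s'] (ξ^[t'] (c₁ z)) := by
    intro z; rw [comm_iter hc₁γ, comm_iter hc₁ξ]
  have hc₂A : ∀ z : S, c₂ (γ^[s] (ξ^[t] z)) = γ^[s] (ξ^[t] (c₂ z)) := by
    intro z; rw [comm_iter hc₂γ, comm_iter hc₂ξ]
  have term1 : op (c₁ (c₂ x)) (γ^[s + s'] (ξ^[t + t'] y))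
      = op (γ^[s + s'] (ξ^[t + t'] x)) (c₂ (c₁ y)) := by
    rw [hAB, hc₁op, ← hc₂A, hc₁A, hc₂op, hBA]
  have term2 : op (c₂ (c₁ x)) (γ^[s + s'] (ξ^[t + t'] y))
      = op (γ^[s + s'] (ξ^[t + t'] x)) (c₁ (c₂ y)) := by
    rw [hBA, hc₂op, ← hc₁A, hc₂A, hc₁op, hAB]
  rw [op_sub_left haddl hsmull, op_sub_right haddr hsmulr, term1, term2]
  abel

end Aux



/-- A BiHom-associative trialgebra structure on a vector space `S` over a field `F`,
given by three bilinear operations `l` (⊣), `r` (⊢), `m` (⊥) and two linear maps `γ`, `ξ`. -/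
structure IsBiHomTrialgebra (F : Type*) [Field F] {S : Type*} [AddCommGroup S] [Module F S]
    (l r m : S → S → S) (γ ξ : S → S) : Prop where
  l_add_left : ∀ x y z : S, l (x + y) z = l x z + l y z
  l_add_right : ∀ x y z : S, l x (y + z) = l x y + l x z
  l_smul_left : ∀ (a : F) (x y : S), l (a • x) y = a • l x y
  l_smul_right : ∀ (a : F) (x y : S), l x (a • y) = a • l x y
  r_add_left : ∀ x y z : S, r (x + y) z = r x z + r y z
  r_add_right : ∀ x y z : S, r x (y + z) = r x y + r x z
  r_smul_left : ∀ (a : F) (x y : S), r (a • x) y = a • r x y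
  r_smul_right : ∀ (a : F) (x y : S), r x (a • y) = a • r x y
  m_add_left : ∀ x y z : S, m (x + y) z = m x z + m y z
  m_add_right : ∀ x y z : S, m x (y + z) = m x y + m x z
  m_smul_left : ∀ (a : F) (x y : S), m (a • x) y = a • m x y
  m_smul_right : ∀ (a : F) (x y : S), m x (a • y) = a • m x y
  gamma_linear : IsLinearMap F γ
  xi_linear : IsLinearMap F ξ
  gamma_xi_comm : ∀ x : S, γ (ξ x) = ξ (γ x)
  gamma_l : ∀ x y : S, γ (l x y) = l (γ x) (γ y)
  gamma_r : ∀ x y : S, γ (r x y) = r (γ x) (γ y)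
  gamma_m : ∀ x y : S, γ (m x y) = m (γ x) (γ y)
  xi_l : ∀ x y : S, ξ (l x y) = l (ξ x) (ξ y)
  xi_r : ∀ x y : S, ξ (r x y) = r (ξ x) (ξ y)
  xi_m : ∀ x y : S, ξ (m x y) = m (ξ x) (ξ y)
  ax1 : ∀ x y z : S, l (l x y) (ξ z) = l (γ x) (l y z)
  ax2 : ∀ x y z : S, l (γ x) (l y z) = l (γ x) (r y z)
  ax3 : ∀ x y z : S, l (γ x) (r y z) = l (γ x) (m y z)
  ax4 : ∀ x y z : S, l (r x y) (ξ z) = r (γ x) (l y z)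
  ax5 : ∀ x y z : S, r (l x y) (ξ z) = r (γ x) (r y z)
  ax6 : ∀ x y z : S, r (r x y) (ξ z) = r (γ x) (r y z)
  ax7 : ∀ x y z : S, r (m x y) (ξ z) = r (γ x) (r y z)
  ax8 : ∀ x y z : S, l (m x y) (ξ z) = m (γ x) (l y z)
  ax9 : ∀ x y z : S, m (l x y) (ξ z) = m (γ x) (r y z)
  ax10 : ∀ x y z : S, m (r x y) (ξ z) = r (γ x) (m y z)
  ax11 : ∀ x y z : S, m (m x y) (ξ z) = m (γ x) (m y z)

/-- A `(γ^s ξ^r)`-quasiderivation of a BiHom-associative trialgebra. -/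
def IsGsxQuasiDerivation (F : Type*) [Field F] {S : Type*} [AddCommGroup S] [Module F S]
    (l r m : S → S → S) (γ ξ : S → S) (s t : ℕ) (δ : S → S) : Prop :=
  IsLinearMap F δ ∧ (∀ x, δ (γ x) = γ (δ x)) ∧ (∀ x, δ (ξ x) = ξ (δ x))
  ∧ ∃ δ' : S → S, IsLinearMap F δ' ∧ (∀ x, δ' (γ x) = γ (δ' x)) ∧ (∀ x, δ' (ξ x) = ξ (δ' x))
      ∧ (∀ x y, δ' (l x y) = l (δ x) (γ^[s] (ξ^[t] y)) + l (γ^[s] (ξ^[t] x)) (δ y))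
      ∧ (∀ x y, δ' (r x y) = r (δ x) (γ^[s] (ξ^[t] y)) + r (γ^[s] (ξ^[t] x)) (δ y))
      ∧ (∀ x y, δ' (m x y) = m (δ x) (γ^[s] (ξ^[t] y)) + m (γ^[s] (ξ^[t] x)) (δ y))

/-- A `(γ^s ξ^r)`-quasicentroid element of a BiHom-associative trialgebra. -/
def IsGsxQuasiCentroid (F : Type*) [Field F] {S : Type*} [AddCommGroup S] [Module F S]
    (l r m : S → S → S) (γ ξ : S → S) (s t : ℕ) (c : S → S) : Prop :=
  IsLinearMap F c ∧ (∀ x, c (γ x) = γ (c x)) ∧ (∀ x, c (ξ x) = ξ (c x))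
  ∧ (∀ x y : S, l (c x) (γ^[s] (ξ^[t] y)) = l (γ^[s] (ξ^[t] x)) (c y))
  ∧ (∀ x y : S, r (c x) (γ^[s] (ξ^[t] y)) = r (γ^[s] (ξ^[t] x)) (c y))
  ∧ (∀ x y : S, m (c x) (γ^[s] (ξ^[t] y)) = m (γ^[s] (ξ^[t] x)) (c y))

/-- The commutator of two quasicentroid elements is a quasiderivation (with associated map `0`):
`[QC(S), QC(S)] ⊆ QD(S)`. -/
theorem commutator_quasicentroids_quasiderivation
    (F : Type*) [Field F] {S : Type*} [AddCommGroup S] [Module F S]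
    (l r m : S → S → S) (γ ξ : S → S)
    (h : IsBiHomTrialgebra F l r m γ ξ)
    (s t s' t' : ℕ) (c₁ c₂ : S → S)
    (hc₁ : IsGsxQuasiCentroid F l r m γ ξ s t c₁)
    (hc₂ : IsGsxQuasiCentroid F l r m γ ξ s' t' c₂) :
    IsGsxQuasiDerivation F l r m γ ξ (s + s') (t + t') (fun x => c₁ (c₂ x) - c₂ (c₁ x))
    ∧ (∀ x y : S,
        l ((fun x => c₁ (c₂ x) - c₂ (c₁ x)) x) (γ^[s + s'] (ξ^[t + t'] y))
          + l (γ^[s + s'] (ξ^[t + t'] x)) ((fun x => c₁ (c₂ x) - c₂ (c₁ x)) y) = 0)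
    ∧ (∀ x y : S,
        r ((fun x => c₁ (c₂ x) - c₂ (c₁ x)) x) (γ^[s + s'] (ξ^[t + t'] y))
          + r (γ^[s + s'] (ξ^[t + t'] x)) ((fun x => c₁ (c₂ x) - c₂ (c₁ x)) y) = 0)
    ∧ (∀ x y : S,
        m ((fun x => c₁ (c₂ x) - c₂ (c₁ x)) x) (γ^[s + s'] (ξ^[t + t'] y))
          + m (γ^[s + s'] (ξ^[t + t'] x)) ((fun x => c₁ (c₂ x) - c₂ (c₁ x)) y) = 0) := by
  
  obtain ⟨hc₁lin, hc₁γ, hc₁ξ, hc₁l, hc₁r, hc₁m⟩ := hc₁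
  obtain ⟨hc₂lin, hc₂γ, hc₂ξ, hc₂l, hc₂r, hc₂m⟩ := hc₂
  have hγξ := h.gamma_xi_comm
  have keyl := key_op γ ξ hγξ s t s' t' c₁ c₂ hc₁γ hc₁ξ hc₂γ hc₂ξ l
    h.l_add_left h.l_smul_left h.l_add_right h.l_smul_right hc₁l hc₂l
  have keyr := key_op γ ξ hγξ s t s' t' c₁ c₂ hc₁γ hc₁ξ hc₂γ hc₂ξ r
    h.r_add_left h.r_smul_left h.r_add_right h.r_smul_right hc₁r hc₂r
  have keym := key_op γ ξ hγξ s t s' t' c₁ c₂ hc₁γ hc₁ξ hc₂γ hc₂ξ m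
    h.m_add_left h.m_smul_left h.m_add_right h.m_smul_right hc₁m hc₂m
  refine ⟨⟨⟨?_, ?_⟩, ?_, ?_, (fun _ => 0), ⟨fun _ _ => (add_zero 0).symm,
      fun a _ => (smul_zero a).symm⟩,
      fun _ => (h.gamma_linear.map_zero).symm,
      fun _ => (h.xi_linear.map_zero).symm,
      fun x y => (keyl x y).symm, fun x y => (keyr x y).symm,
      fun x y => (keym x y).symm⟩, keyl, keyr, keym⟩
  · intro x y
    simp only [hc₁lin.map_add, hc₂lin.map_add]
    abel
  · intro a x
    simp only [hc₁lin.map_smul, hc₂lin.map_smul, smul_sub]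
  · intro x
    simp only [hc₂γ, hc₁γ]
    exact (h.gamma_linear.map_sub _ _).symm
  · intro x
    simp only [hc₂ξ, hc₁ξ]
    exact (h.xi_linear.map_sub _ _).symm
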